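/- The common zero locus in ℂ² of the ideal J = (f_0, f_1), where f_0 = Σ_{j=0}^{⌊(k+1)/2⌋} (−1)^j ((k+1)!/((k+1−2j)!(j!)²)) y^{k+1−2j} z^j and f_1 = ((k+2)y² − 2kz)∂f_0/∂y + (3k+4)yz ∂f_0/∂z (k ≥ 5), is exactly {(0,0)}. -/

import Mathlib

open MvPolynomial

/-- The operator `D = ((k+2)y² − 2kz) ∂/∂y + (3k+4) yz ∂/∂z` on `ℂ[y,z]`. -/
noncomputable def D2 (k : ℂ) : MvPolynomial (Fin 2) ℂ → MvPolynomial (Fin 2) ℂ :=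
  fun p => (C (k + 2) * X 0 ^ 2 - C (2 * k) * X 1) * pderiv 0 p
    + C (3 * k + 4) * X 0 * X 1 * pderiv 1 p

/-- `f₀(y,z) = Σⱼ (−1)ʲ (k+1)!/((k+1−2j)!(j!)²) y^{k+1−2j} zʲ`. -/
noncomputable def f0 (k : ℕ) : MvPolynomial (Fin 2) ℂ :=
  ∑ j ∈ Finset.range ((k + 1) / 2 + 1),
    C ((-1) ^ j * (Nat.factorial (k + 1) : ℂ) /
      (Nat.factorial (k + 1 - 2 * j) * (Nat.factorial j) ^ 2)) *
    X 0 ^ (k + 1 - 2 * j) * X 1 ^ j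

/-!
Away from the axis `y = 0` write `z = u y²`; then `f₀(y, z) = y^{k+1} P(u)` with
`P(u) = f₀(1, u)`, and on the zero set of `f₀` the second generator becomes
`k y^{k+2} u (1 + 4u) P'(u)`. The coefficients of `P` obey a two-term recurrence, which says that
`P` solves `u (1 + 4u) P'' + (1 + (2 - 4k) u) P' + k (k + 1) P = 0`. Since `P(0) = 1` and
`P(-1/4)` is a sum of positive terms, a common zero would be a double root of `P` at a regular
point of this equation, forcing `P = 0`. On the axis `y = 0` only the top term of `f₀` (for odd
`k`) or of `∂f₀/∂y` (for even `k`) survives, and it is a nonzero multiple of a power of `z`.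
-/

open Finset

namespace Polynomial

theorem eq_zero_of_ode_of_isRoot_derivative {K : Type*} [Field K] [CharZero K]
    {a b c p : K[X]} {u : K}
    (hode : a * derivative (derivative p) + b * derivative p + c * p = 0)
    (ha : a.eval u ≠ 0) (hp : p.IsRoot u) (hp' : (derivative p).IsRoot u) : p = 0 := by
  have eq_zero_of_derivative : ∀ q : K[X], derivative q = 0 → q.IsRoot u → q = 0 := by
    intro q hq hqu
    rw [eq_C_of_natDegree_eq_zero (derivative_eq_zero.mp hq)] at hqu ⊢
    simpa using hqu
  by_contra hp0
  have hm : 1 < p.rootMultiplicity u := (one_lt_rootMultiplicity_iff_isRoot hp0).2 ⟨hp, hp'⟩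
  have hprod : a * derivative (derivative p) ≠ 0 :=
    mul_ne_zero (by rintro rfl; simp at ha)
      fun h => hp0 (eq_zero_of_derivative p (eq_zero_of_derivative _ h hp') hp)
  have hdvd : (X - C u) ^ (p.rootMultiplicity u - 1) ∣ a * derivative (derivative p) := by
    rw [show a * derivative (derivative p) = -(b * derivative p + c * p) by
      linear_combination hode, dvd_neg]
    refine dvd_add (dvd_mul_of_dvd_right ?_ _) (dvd_mul_of_dvd_right ?_ _)
    · rw [← derivative_rootMultiplicity_of_root hp]
      exact pow_rootMultiplicity_dvd _ _
    · exact (pow_dvd_pow _ (Nat.sub_le _ _)).trans (pow_rootMultiplicity_dvd _ _)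
  have := (le_rootMultiplicity_iff hprod).2 hdvd
  rw [rootMultiplicity_mul hprod, rootMultiplicity_eq_zero ha,
    derivative_rootMultiplicity_of_root hp', derivative_rootMultiplicity_of_root hp] at this
  omega

theorem coeff_X_mul_derivative {R : Type*} [Semiring R] (p : R[X]) (n : ℕ) :
    (X * derivative p).coeff n = n * p.coeff n := by
  cases n with
  | zero => simp
  | succ n =>
    rw [coeff_X_mul, coeff_derivative, ← Nat.cast_succ]
    exact (Nat.cast_comm _ _).symm

theorem X_mul_derivative_monomial {R : Type*} [Semiring R] (n : ℕ) (a : R) :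
    X * derivative (monomial n a) = monomial n (n * a) := by
  ext m
  rw [coeff_X_mul_derivative, coeff_monomial, coeff_monomial]
  split_ifs with h
  · rw [h]
  · rw [mul_zero]

end Polynomial

theorem MvPolynomial.X_mul_pderiv_C_mul_X_pow_mul_X_pow {R : Type*} [CommSemiring R]
    (i : Fin 2) (c : R) (a b : ℕ) :
    X i * pderiv i (C c * X 0 ^ a * X 1 ^ b) = C (![a, b] i * c) * X 0 ^ a * X 1 ^ b := by
  have monomial_eq (c : R) : (C c * X 0 ^ a * X 1 ^ b : MvPolynomial (Fin 2) R)
      = monomial (Finsupp.single 0 a + Finsupp.single 1 b) c := by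
    simp [X_pow_eq_monomial, C_mul_monomial, monomial_mul]
  rw [monomial_eq, monomial_eq, X_mul_pderiv_monomial, smul_monomial]
  fin_cases i <;> simp [nsmul_eq_mul]

noncomputable def weightedForm (n : ℕ) (b : ℕ → ℂ) : MvPolynomial (Fin 2) ℂ :=
  ∑ j ∈ range (n / 2 + 1), C (b j) * X 0 ^ (n - 2 * j) * X 1 ^ j

section weightedForm

variable (n : ℕ) (b : ℕ → ℂ)

theorem eval_weightedForm (y u : ℂ) :
    eval ![y, u * y ^ 2] (weightedForm n b) = y ^ n * ∑ j ∈ range (n / 2 + 1), b j * u ^ j := by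
  rw [weightedForm, map_sum, mul_sum]
  refine sum_congr rfl fun j hj => ?_
  have h2j : 2 * j ≤ n := by have := mem_range.1 hj; omega
  rw [show y ^ n = y ^ (n - 2 * j) * (y ^ 2) ^ j by
    rw [← pow_mul, ← pow_add, Nat.sub_add_cancel h2j]]
  simp
  ring

theorem X_mul_pderiv_zero_weightedForm :
    X 0 * pderiv 0 (weightedForm n b) = weightedForm n (fun j => (n - 2 * j : ℕ) * b j) := by
  rw [weightedForm, weightedForm, map_sum, mul_sum]
  exact sum_congr rfl fun j _ => X_mul_pderiv_C_mul_X_pow_mul_X_pow 0 _ _ _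

theorem X_mul_pderiv_one_weightedForm :
    X 1 * pderiv 1 (weightedForm n b) = weightedForm n (fun j => j * b j) := by
  rw [weightedForm, weightedForm, map_sum, mul_sum]
  exact sum_congr rfl fun j _ => X_mul_pderiv_C_mul_X_pow_mul_X_pow 1 _ _ _

theorem eval_zero_weightedForm_two_mul (t : ℕ) (z : ℂ) :
    eval ![0, z] (weightedForm (2 * t) b) = b t * z ^ t := by
  rw [weightedForm, map_sum, sum_eq_single_of_mem t (by simp)]
  · simp [mul_comm]
  · intro j hj hjt
    have : 2 * t - 2 * j ≠ 0 := by have := mem_range.1 hj; omega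
    simp [this]

theorem eval_zero_pderiv_zero_weightedForm_two_mul_add_one (t : ℕ) (z : ℂ) :
    eval ![0, z] (pderiv 0 (weightedForm (2 * t + 1) b)) = b t * z ^ t := by
  rw [weightedForm, map_sum, map_sum, sum_eq_single_of_mem t (by simp; omega)]
  · simp [mul_comm]
  · intro j hj hjt
    have : 2 * t + 1 - 2 * j - 1 ≠ 0 := by have := mem_range.1 hj; omega
    simp [this]

end weightedForm

noncomputable def f0Coeff (k j : ℕ) : ℂ :=
  (-1) ^ j * (k + 1).factorial / ((k + 1 - 2 * j).factorial * j.factorial ^ 2)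

theorem f0_eq_weightedForm (k : ℕ) : f0 k = weightedForm (k + 1) (f0Coeff k) := rfl

theorem f0Coeff_ne_zero (k j : ℕ) : f0Coeff k j ≠ 0 := by
  simp [f0Coeff, Nat.factorial_ne_zero]

theorem f0Coeff_zero (k : ℕ) : f0Coeff k 0 = 1 := by
  simp [f0Coeff, Nat.factorial_ne_zero]

theorem f0Coeff_succ {k j : ℕ} (hj : 2 * (j + 1) ≤ k + 1) :
    (j + 1) ^ 2 * f0Coeff k (j + 1) = -((k + 1 - 2 * j) * (k - 2 * j)) * f0Coeff k j := by
  obtain ⟨b, rfl⟩ : ∃ b, k = 2 * j + 1 + b := ⟨k - 2 * j - 1, by omega⟩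
  rw [f0Coeff, f0Coeff, show 2 * j + 1 + b + 1 - 2 * (j + 1) = b by omega,
    show 2 * j + 1 + b + 1 - 2 * j = b + 2 by omega, Nat.factorial_succ j,
    Nat.factorial_succ (b + 1), Nat.factorial_succ b]
  push_cast
  have hbf : (b.factorial : ℂ) ≠ 0 := by exact_mod_cast Nat.factorial_ne_zero b
  have hjf : (j.factorial : ℂ) ≠ 0 := by exact_mod_cast Nat.factorial_ne_zero j
  have hb1 : (b : ℂ) + 1 ≠ 0 := by exact_mod_cast Nat.succ_ne_zero b
  have hb2 : (b : ℂ) + 1 + 1 ≠ 0 := by exact_mod_cast Nat.succ_ne_zero (b + 1)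
  have hj1 : (j : ℂ) + 1 ≠ 0 := by exact_mod_cast Nat.succ_ne_zero j
  field_simp
  ring

namespace Polynomial

noncomputable def f0Dehom (k : ℕ) : ℂ[X] :=
  ∑ j ∈ range ((k + 1) / 2 + 1), monomial j (f0Coeff k j)

theorem coeff_f0Dehom (k n : ℕ) :
    (f0Dehom k).coeff n = if n ∈ range ((k + 1) / 2 + 1) then f0Coeff k n else 0 := by
  simp [f0Dehom, coeff_monomial]

theorem coeff_f0Dehom_succ (k n : ℕ) :
    (n + 1) ^ 2 * (f0Dehom k).coeff (n + 1) + (k + 1 - 2 * n) * (k - 2 * n) * (f0Dehom k).coeff n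
      = 0 := by
  simp only [coeff_f0Dehom, mem_range]
  split_ifs with h1 h2 h2
  · push_cast [f0Coeff_succ (show 2 * (n + 1) ≤ k + 1 by omega)]
    ring
  · omega
  · obtain h | h : k = 2 * n ∨ k + 1 = 2 * n := by omega
    · simp [h]
    · simp [show (k : ℂ) + 1 = 2 * n by exact_mod_cast h]
  · simp

theorem f0Dehom_ode (k : ℕ) :
    X * (1 + C 4 * X) * derivative (derivative (f0Dehom k))
      + (1 + C (2 - 4 * k : ℂ) * X) * derivative (f0Dehom k) + C (k * (k + 1) : ℂ) * f0Dehom k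
      = 0 := by
  set P := f0Dehom k
  -- Rewritten with the Euler operator `X * derivative`, which acts diagonally on coefficients.
  have : X * (1 + C 4 * X) * derivative (derivative P)
      + (1 + C (2 - 4 * k : ℂ) * X) * derivative P + C (k * (k + 1) : ℂ) * P
      = derivative (X * derivative P) + C 4 * (X * derivative (X * derivative P))
        - C (2 + 4 * k : ℂ) * (X * derivative P) + C (k * (k + 1) : ℂ) * P := by
    simp only [derivative_mul, derivative_X, map_add, map_sub, map_mul, map_one, map_ofNat,
      map_natCast]
    ring
  rw [this]
  ext n
  simp only [coeff_add, coeff_sub, coeff_C_mul, coeff_derivative, coeff_X_mul_derivative,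
    coeff_zero]
  push_cast
  linear_combination coeff_f0Dehom_succ k n

theorem eval_f0Dehom (k : ℕ) (u : ℂ) :
    (f0Dehom k).eval u = ∑ j ∈ range ((k + 1) / 2 + 1), f0Coeff k j * u ^ j := by
  simp [f0Dehom, eval_finsetSum]

theorem mul_eval_derivative_f0Dehom (k : ℕ) (u : ℂ) :
    u * (derivative (f0Dehom k)).eval u
      = ∑ j ∈ range ((k + 1) / 2 + 1), j * f0Coeff k j * u ^ j := by
  rw [show u * _ = (X * derivative (f0Dehom k)).eval u by simp, f0Dehom, map_sum, mul_sum]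
  simp [X_mul_derivative_monomial, eval_finsetSum]

theorem eval_zero_f0Dehom (k : ℕ) : (f0Dehom k).eval 0 = 1 := by
  rw [← coeff_zero_eq_eval_zero, coeff_f0Dehom, if_pos (by simp), f0Coeff_zero]

theorem eval_neg_quarter_f0Dehom_ne_zero (k : ℕ) : (f0Dehom k).eval (-1 / 4) ≠ 0 := by
  have hterm (j : ℕ) : f0Coeff k j * (-1 / 4) ^ j = (((k + 1).factorial
      / ((k + 1 - 2 * j).factorial * j.factorial ^ 2 * 4 ^ j) : ℝ) : ℂ) := by
    rw [f0Coeff, div_pow]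
    push_cast
    have h4 : (4 : ℂ) ^ j ≠ 0 := pow_ne_zero _ (by norm_num)
    field_simp
    rw [pow_right_comm, neg_one_sq, one_pow, one_mul]
  rw [eval_f0Dehom, sum_congr rfl fun j _ => hterm j, ← Complex.ofReal_sum,
    Complex.ofReal_ne_zero]
  exact (sum_pos (fun j _ => by positivity) nonempty_range_add_one).ne'

theorem mul_eval_derivative_f0Dehom_ne_zero {k : ℕ} {u : ℂ} (hu : (f0Dehom k).IsRoot u) :
    u * (1 + 4 * u) * (derivative (f0Dehom k)).eval u ≠ 0 := by
  have hu0 : u ≠ 0 := by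
    rintro rfl
    simp [IsRoot, eval_zero_f0Dehom] at hu
  have hu4 : 1 + 4 * u ≠ 0 := fun h => eval_neg_quarter_f0Dehom_ne_zero k <| by
    rwa [show u = -1 / 4 by linear_combination h / 4] at hu
  refine mul_ne_zero (mul_ne_zero hu0 hu4) fun hu' => ?_
  have := eq_zero_of_ode_of_isRoot_derivative (f0Dehom_ode k) (by simpa using mul_ne_zero hu0 hu4)
    hu hu'
  simpa [this] using eval_zero_f0Dehom k

end Polynomial

theorem eval_f0 (k : ℕ) (y u : ℂ) :
    eval ![y, u * y ^ 2] (f0 k) = y ^ (k + 1) * (Polynomial.f0Dehom k).eval u := by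
  rw [f0_eq_weightedForm, eval_weightedForm, Polynomial.eval_f0Dehom]

theorem mul_eval_D2_f0 (k : ℕ) (y u : ℂ) :
    y * eval ![y, u * y ^ 2] (D2 k (f0 k)) = y ^ (k + 3) * ((k + 1) * (k + 2 - 2 * k * u)
      * (Polynomial.f0Dehom k).eval u
      + k * (u * (1 + 4 * u) * (Polynomial.derivative (Polynomial.f0Dehom k)).eval u)) := by
  set P := Polynomial.f0Dehom k
  have hA : eval ![y, u * y ^ 2] (X 0 * pderiv 0 (f0 k))
      = y ^ (k + 1) * ((k + 1) * P.eval u - 2 * (u * (Polynomial.derivative P).eval u)) := by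
    rw [f0_eq_weightedForm, X_mul_pderiv_zero_weightedForm, eval_weightedForm,
      Polynomial.eval_f0Dehom, Polynomial.mul_eval_derivative_f0Dehom]
    congr 1
    rw [mul_sum, mul_sum, ← sum_sub_distrib]
    refine sum_congr rfl fun j hj => ?_
    rw [Nat.cast_sub (by have := mem_range.1 hj; omega)]
    push_cast
    ring
  have hB : eval ![y, u * y ^ 2] (X 1 * pderiv 1 (f0 k))
      = y ^ (k + 1) * (u * (Polynomial.derivative P).eval u) := by
    rw [f0_eq_weightedForm, X_mul_pderiv_one_weightedForm, eval_weightedForm,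
      Polynomial.mul_eval_derivative_f0Dehom]
  have hD : X 0 * D2 k (f0 k) = (C ((k : ℂ) + 2) * X 0 ^ 2 - C (2 * (k : ℂ)) * X 1)
      * (X 0 * pderiv 0 (f0 k)) + C (3 * (k : ℂ) + 4) * X 0 ^ 2 * (X 1 * pderiv 1 (f0 k)) := by
    rw [D2]
    ring
  generalize X 0 * pderiv 0 (f0 k) = A at hA hD
  generalize X 1 * pderiv 1 (f0 k) = B at hB hD
  have := congrArg (eval ![y, u * y ^ 2]) hD
  simp only [map_add, map_sub, map_mul, map_pow, eval_X, eval_C, hA, hB, Matrix.cons_val_zero,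
    Matrix.cons_val_one] at this
  rw [this]
  ring

theorem eval_D2_f0_ne_zero_of_eval_f0_eq_zero {k : ℕ} (hk : k ≠ 0) {y z : ℂ} (hy : y ≠ 0)
    (h0 : eval ![y, z] (f0 k) = 0) : eval ![y, z] (D2 k (f0 k)) ≠ 0 := by
  intro h1
  obtain ⟨u, rfl⟩ : ∃ u, z = u * y ^ 2 := ⟨z / y ^ 2, by field_simp⟩
  rw [eval_f0] at h0
  have hP : (Polynomial.f0Dehom k).IsRoot u := (mul_eq_zero.1 h0).resolve_left (pow_ne_zero _ hy)
  have hD := mul_eval_D2_f0 k y u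
  rw [h1, hP.eq_zero, mul_zero, mul_zero, zero_add, eq_comm] at hD
  exact Polynomial.mul_eval_derivative_f0Dehom_ne_zero hP (by simpa [hy, hk] using hD)

theorem eq_zero_of_eval_zero_f0_of_eval_zero_D2_f0 {k : ℕ} (hk : k ≠ 0) {z : ℂ}
    (h0 : eval ![0, z] (f0 k) = 0) (h1 : eval ![0, z] (D2 k (f0 k)) = 0) : z = 0 := by
  obtain ⟨t, rfl | rfl⟩ := Nat.even_or_odd' k
  · rw [D2, f0_eq_weightedForm] at h1
    simpa [eval_zero_pderiv_zero_weightedForm_two_mul_add_one, f0Coeff_ne_zero,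
      show t ≠ 0 by omega] using h1
  · rw [f0_eq_weightedForm, show 2 * t + 1 + 1 = 2 * (t + 1) by ring,
      eval_zero_weightedForm_two_mul] at h0
    simpa [f0Coeff_ne_zero] using h0

theorem stmt_15 (k : ℕ) (hk : 5 ≤ k) (y z : ℂ) :
    (eval (![y, z] : Fin 2 → ℂ) (f0 k) = 0 ∧
      eval (![y, z] : Fin 2 → ℂ) (D2 (k : ℂ) (f0 k)) = 0) ↔ (y = 0 ∧ z = 0) := by
  have hk0 : k ≠ 0 := by omega
  constructor
  · rintro ⟨h0, h1⟩
    rcases eq_or_ne y 0 with rfl | hy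
    · exact ⟨rfl, eq_zero_of_eval_zero_f0_of_eval_zero_D2_f0 hk0 h0 h1⟩
    · exact absurd h1 (eval_D2_f0_ne_zero_of_eval_f0_eq_zero hk0 hy h0)
  · rintro ⟨rfl, rfl⟩
    exact ⟨by simpa using eval_f0 k 0 0, by simp [D2]⟩
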